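/- arXiv:2303.13956 — 2 statements merged into one kernel-verified Lean document; each statement's English description precedes it below -/
import Mathlib

section
/- If f and g are C^3 functions on an open interval with nowhere-vanishing derivatives and S_f = S_g, then f is a Möbius transform of g, i.e., f = (a·g + b)/(c·g + d) for some constants with ad − bc ≠ 0. -/
/-!
For `u = |f'|^(-1/2)` one computes `u' = -(f'' / 2f') u` and `u'' = -(S_f / 2) u`; since
`f'' u + 2 f' u' = 0`, also `(f u)'' = -(S_f / 2) (f u)`. So when `S_f = S_g` the functions `u`,
`f u`, `v = |g'|^(-1/2)` and `g v` all solve one equation `y'' = k y`, and their Wronskians are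
constant. Cramer's rule in the basis `(g v, v)`, whose Wronskian `-g' v²` never vanishes, writes
`f u` and `u` as constant combinations of `g v` and `v`, so `f = f u / u` is a Möbius function of
`g = g v / v`. The absolute value spares a case split on the sign of `f'`.
-/

open Set Filter Topology

noncomputable def schwarzian (f : ℝ → ℝ) (x : ℝ) : ℝ :=
  deriv (deriv (deriv f)) x / deriv f x - 3 / 2 * (deriv (deriv f) x / deriv f x) ^ 2

noncomputable def wronskian (y₁ y₂ : ℝ → ℝ) (x : ℝ) : ℝ :=
  y₁ x * deriv y₂ x - deriv y₁ x * y₂ x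

section Wronskian

variable {y y₁ y₂ w : ℝ → ℝ} {x : ℝ}

theorem wronskian_mul_eq_add :
    wronskian y₁ y₂ x * y x = wronskian y y₂ x * y₁ x + wronskian y₁ y x * y₂ x := by
  unfold wronskian; ring

theorem wronskian_mul_wronskian_sub :
    wronskian y y₂ x * wronskian y₁ w x - wronskian y₁ y x * wronskian w y₂ x =
      wronskian y w x * wronskian y₁ y₂ x := by
  unfold wronskian; ring

theorem wronskian_mul_left {f : ℝ → ℝ} (hf : DifferentiableAt ℝ f x)
    (hy : DifferentiableAt ℝ y x) : wronskian (f * y) y x = -(deriv f x * y x ^ 2) := by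
  unfold wronskian
  rw [deriv_mul hf hy]
  simp only [Pi.mul_apply]
  ring

theorem eq_div_of_wronskian_ne_zero {r s : ℝ} (hy : y x = r * w x) (hy₁ : y₁ x = s * y₂ x)
    (hw : w x ≠ 0) (hy₂ : y₂ x ≠ 0) (hW : wronskian y₁ y₂ x ≠ 0) :
    r = (wronskian y y₂ x * s + wronskian y₁ y x) /
      (wronskian w y₂ x * s + wronskian y₁ w x) := by
  have hy' : wronskian y₁ y₂ x * y x =
      (wronskian y y₂ x * s + wronskian y₁ y x) * y₂ x := by
    rw [wronskian_mul_eq_add, hy₁]; ring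
  have hw' : wronskian y₁ y₂ x * w x =
      (wronskian w y₂ x * s + wronskian y₁ w x) * y₂ x := by
    rw [wronskian_mul_eq_add, hy₁]; ring
  have hden : wronskian w y₂ x * s + wronskian y₁ w x ≠ 0 := by
    rintro h
    rw [h, zero_mul] at hw'
    exact mul_ne_zero hW hw hw'
  rw [eq_div_iff hden]
  apply mul_right_cancel₀ hy₂
  linear_combination hy' - r * hw' - wronskian y₁ y₂ x * hy

end Wronskian

/-- `y'' = k * y` on `s`. -/
def IsSolutionOn (k y : ℝ → ℝ) (s : Set ℝ) : Prop :=
  ∀ x ∈ s, HasDerivAt y (deriv y x) x ∧ HasDerivAt (deriv y) (k x * y x) x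

namespace IsSolutionOn

variable {k k' y y₁ y₂ y' : ℝ → ℝ} {s : Set ℝ}

theorem of_hasDerivAt (hs : IsOpen s) (hy : ∀ x ∈ s, HasDerivAt y (y' x) x)
    (hy' : ∀ x ∈ s, HasDerivAt y' (k x * y x) x) : IsSolutionOn k y s := by
  intro x hx
  have hderiv : deriv y =ᶠ[𝓝 x] y' :=
    eventually_of_mem (hs.mem_nhds hx) fun z hz => (hy z hz).deriv
  exact ⟨(hy x hx).differentiableAt.hasDerivAt, (hy' x hx).congr_of_eventuallyEq hderiv⟩

theorem congr_coeff (h : IsSolutionOn k y s) (hk : EqOn k k' s) : IsSolutionOn k' y s :=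
  fun x hx => hk hx ▸ h x hx

theorem hasDerivAt_wronskian (h₁ : IsSolutionOn k y₁ s) (h₂ : IsSolutionOn k y₂ s) {x : ℝ}
    (hx : x ∈ s) : HasDerivAt (wronskian y₁ y₂) 0 x := by
  obtain ⟨hy₁, hy₁'⟩ := h₁ x hx
  obtain ⟨hy₂, hy₂'⟩ := h₂ x hx
  refine ((hy₁.mul hy₂').sub (hy₁'.mul hy₂)).congr_deriv ?_
  ring

theorem wronskian_eq (h₁ : IsSolutionOn k y₁ s) (h₂ : IsSolutionOn k y₂ s) (hs : IsOpen s)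
    (hs' : IsPreconnected s) {x z : ℝ} (hx : x ∈ s) (hz : z ∈ s) :
    wronskian y₁ y₂ x = wronskian y₁ y₂ z :=
  hs.is_const_of_deriv_eq_zero hs'
    (fun _ ht => (h₁.hasDerivAt_wronskian h₂ ht).differentiableAt.differentiableWithinAt)
    (fun _ ht => (h₁.hasDerivAt_wronskian h₂ ht).deriv) hx hz

theorem mul {u f f' f'' : ℝ → ℝ} (hs : IsOpen s)
    (hu : IsSolutionOn k u s) (hf : ∀ x ∈ s, HasDerivAt f (f' x) x)
    (hf' : ∀ x ∈ s, HasDerivAt f' (f'' x) x)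
    (hfu : ∀ x ∈ s, f'' x * u x + 2 * f' x * deriv u x = 0) : IsSolutionOn k (f * u) s := by
  refine .of_hasDerivAt hs (fun x hx => (hf x hx).mul (hu x hx).1) fun x hx => ?_
  refine (((hf' x hx).mul (hu x hx).1).add ((hf x hx).mul (hu x hx).2)).congr_deriv ?_
  rw [Pi.mul_apply]
  linear_combination hfu x hx

end IsSolutionOn

theorem HasDerivAt.inv_sqrt_abs {p : ℝ → ℝ} {p' x : ℝ} (hp : HasDerivAt p p' x)
    (hx : p x ≠ 0) :
    HasDerivAt (fun y => (√|p y|)⁻¹) (-(p' / (2 * p x)) * (√|p x|)⁻¹) x := by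
  have habs : |p x| ≠ 0 := abs_ne_zero.2 hx
  have hsqrt : √|p x| ≠ 0 := Real.sqrt_ne_zero'.2 (abs_pos.2 hx)
  refine ((((hasDerivAt_abs hx).comp x hp).sqrt habs).inv hsqrt).congr_deriv ?_
  have hsign : (SignType.sign (p x) : ℝ) = p x / |p x| := by
    rcases hx.lt_or_gt with h | h
    · simp [h, abs_of_neg h, div_neg, div_self hx]
    · simp [h, abs_of_pos h, div_self hx]
  simp only [Function.comp_apply, Real.sq_sqrt (abs_nonneg _), hsign]
  field_simp
  rw [sq_abs]

theorem ContDiffOn.hasDerivAt_derivs_of_isOpen {f : ℝ → ℝ} {s : Set ℝ} {x : ℝ}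
    (hf : ContDiffOn ℝ 3 f s) (hs : IsOpen s) (hx : x ∈ s) :
    HasDerivAt f (deriv f x) x ∧ HasDerivAt (deriv f) (deriv (deriv f) x) x ∧
      HasDerivAt (deriv (deriv f)) (deriv (deriv (deriv f)) x) x := by
  have hf₁ : ContDiffOn ℝ 2 (deriv f) s := hf.deriv_of_isOpen hs (by norm_num)
  have hf₂ : ContDiffOn ℝ 1 (deriv (deriv f)) s := hf₁.deriv_of_isOpen hs (by norm_num)
  have hx' := hs.mem_nhds hx
  exact ⟨((hf.contDiffAt hx').differentiableAt (by norm_num)).hasDerivAt,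
    ((hf₁.contDiffAt hx').differentiableAt (by norm_num)).hasDerivAt,
    ((hf₂.contDiffAt hx').differentiableAt (by norm_num)).hasDerivAt⟩

noncomputable def invSqrtAbsDeriv (f : ℝ → ℝ) (x : ℝ) : ℝ :=
  (√|deriv f x|)⁻¹

section Schwarzian

variable {f : ℝ → ℝ} {s : Set ℝ} {x : ℝ}

theorem invSqrtAbsDeriv_ne_zero (hx : deriv f x ≠ 0) : invSqrtAbsDeriv f x ≠ 0 :=
  inv_ne_zero (Real.sqrt_ne_zero'.2 (abs_pos.2 hx))

theorem hasDerivAt_invSqrtAbsDeriv (hf : HasDerivAt (deriv f) (deriv (deriv f) x) x)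
    (hx : deriv f x ≠ 0) :
    HasDerivAt (invSqrtAbsDeriv f)
      (-(deriv (deriv f) x / (2 * deriv f x)) * invSqrtAbsDeriv f x) x :=
  hf.inv_sqrt_abs hx

theorem isSolutionOn_invSqrtAbsDeriv (hs : IsOpen s) (hf : ContDiffOn ℝ 3 f s)
    (hf' : ∀ x ∈ s, deriv f x ≠ 0) :
    IsSolutionOn (fun x => -schwarzian f x / 2) (invSqrtAbsDeriv f) s := by
  refine .of_hasDerivAt hs (fun x hx => hasDerivAt_invSqrtAbsDeriv
    (hf.hasDerivAt_derivs_of_isOpen hs hx).2.1 (hf' x hx)) fun x hx => ?_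
  obtain ⟨-, h₂, h₃⟩ := hf.hasDerivAt_derivs_of_isOpen hs hx
  have hx' := hf' x hx
  refine (((h₃.div (h₂.const_mul 2) (by positivity)).neg).mul
    (hasDerivAt_invSqrtAbsDeriv h₂ hx')).congr_deriv ?_
  simp only [schwarzian, Pi.neg_apply, Pi.div_apply]
  field_simp
  ring

theorem isSolutionOn_mul_invSqrtAbsDeriv (hs : IsOpen s) (hf : ContDiffOn ℝ 3 f s)
    (hf' : ∀ x ∈ s, deriv f x ≠ 0) :
    IsSolutionOn (fun x => -schwarzian f x / 2) (f * invSqrtAbsDeriv f) s := by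
  refine (isSolutionOn_invSqrtAbsDeriv hs hf hf').mul hs
    (fun x hx => (hf.hasDerivAt_derivs_of_isOpen hs hx).1)
    (fun x hx => (hf.hasDerivAt_derivs_of_isOpen hs hx).2.1) fun x hx => ?_
  have hx' := hf' x hx
  rw [(hasDerivAt_invSqrtAbsDeriv (hf.hasDerivAt_derivs_of_isOpen hs hx).2.1 hx').deriv]
  field_simp
  ring

theorem wronskian_mul_invSqrtAbsDeriv_ne_zero (hs : IsOpen s) (hf : ContDiffOn ℝ 3 f s)
    (hx : x ∈ s) (hx' : deriv f x ≠ 0) :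
    wronskian (f * invSqrtAbsDeriv f) (invSqrtAbsDeriv f) x ≠ 0 := by
  obtain ⟨h₁, h₂, -⟩ := hf.hasDerivAt_derivs_of_isOpen hs hx
  rw [wronskian_mul_left h₁.differentiableAt
    (hasDerivAt_invSqrtAbsDeriv h₂ hx').differentiableAt]
  exact neg_ne_zero.2 (mul_ne_zero hx' (pow_ne_zero 2 (invSqrtAbsDeriv_ne_zero hx')))

end Schwarzian

/-- If two `C^3` functions with nowhere-vanishing derivatives on an open interval
have the same Schwarzian derivative, then one is a Möbius transform of the other. -/
theorem mobius_of_schwarzian_eq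
    (I : Set ℝ) (hIopen : IsOpen I) (hIconv : Convex ℝ I) (hIne : I.Nonempty)
    (f g : ℝ → ℝ) (hf : ContDiffOn ℝ 3 f I) (hg : ContDiffOn ℝ 3 g I)
    (hf' : ∀ x ∈ I, deriv f x ≠ 0) (hg' : ∀ x ∈ I, deriv g x ≠ 0)
    (hS : ∀ x ∈ I,
      deriv (deriv (deriv f)) x / deriv f x
          - (3 / 2) * (deriv (deriv f) x / deriv f x) ^ 2 =
        deriv (deriv (deriv g)) x / deriv g x
          - (3 / 2) * (deriv (deriv g) x / deriv g x) ^ 2) :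
    ∃ a b c d : ℝ, a * d - b * c ≠ 0 ∧
      ∀ x ∈ I, f x = (a * g x + b) / (c * g x + d) := by
  obtain ⟨x₀, hx₀⟩ := hIne
  set u := invSqrtAbsDeriv f
  set v := invSqrtAbsDeriv g
  set k := fun x => -schwarzian f x / 2
  have hk : EqOn (fun x => -schwarzian g x / 2) k I :=
    fun x hx => by simp only [k, schwarzian, hS x hx]
  have hu := isSolutionOn_invSqrtAbsDeriv hIopen hf hf'
  have hfu := isSolutionOn_mul_invSqrtAbsDeriv hIopen hf hf'
  have hv := (isSolutionOn_invSqrtAbsDeriv hIopen hg hg').congr_coeff hk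
  have hgv := (isSolutionOn_mul_invSqrtAbsDeriv hIopen hg hg').congr_coeff hk
  have hW {y z} (hy : IsSolutionOn k y I) (hz : IsSolutionOn k z I) {x} (hx : x ∈ I) :
      wronskian y z x₀ = wronskian y z x :=
    hy.wronskian_eq hz hIopen hIconv.isPreconnected hx₀ hx
  refine ⟨wronskian (f * u) v x₀, wronskian (g * v) (f * u) x₀, wronskian u v x₀,
    wronskian (g * v) u x₀, ?_, fun x hx => ?_⟩
  · rw [wronskian_mul_wronskian_sub]
    exact mul_ne_zero (wronskian_mul_invSqrtAbsDeriv_ne_zero hIopen hf hx₀ (hf' x₀ hx₀))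
      (wronskian_mul_invSqrtAbsDeriv_ne_zero hIopen hg hx₀ (hg' x₀ hx₀))
  · rw [hW hfu hv hx, hW hgv hfu hx, hW hu hv hx, hW hgv hu hx]
    exact eq_div_of_wronskian_ne_zero rfl rfl (invSqrtAbsDeriv_ne_zero (hf' x hx))
      (invSqrtAbsDeriv_ne_zero (hg' x hx))
      (wronskian_mul_invSqrtAbsDeriv_ne_zero hIopen hg hx (hg' x hx))
end

section
/- Pathwise comparison with a reflected version: let β be a Brownian motion, T_f locally Lipschitz, X solve X_t = X_0 + β_t − ∫_0^t (1/2)T_f(X_u)du, and X' solve the Skorokhod-type equation X'_t = X_0 + β_t − ∫_0^t (1/2)T_f(X'_u)du + 2(J'_t − J'_0), where J' is nondecreasing, J'_0 ∈ (0, X_0], X'_t ≥ J'_t, and J' increases only when X' = J'. Then X_t ≤ X'_t for all t ≥ 0 almost surely. -/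
/-!
Let `D = X - X'`. Subtracting the two equations, the Brownian terms cancel and the reflection
term `2 (J'_u - J'_s)` only pushes `X'` up, so the Lipschitz bound on `T_f` over a compact range
of the paths gives `D u - D s ≤ (L/2) ∫ₛᵘ |D|`. If `D t > 0`, start at the last zero `s` of `D`
before `t`; on `[s, t]` we get `D u ≤ (L/2) ∫ₛᵘ D` with `D ≥ 0`, and Gronwall's inequality
forces `D = 0` there, a contradiction.
-/

open MeasureTheory intervalIntegral Set

theorem eqOn_zero_of_le_mul_integral {F : ℝ → ℝ} {K s t : ℝ} (hF : Continuous F)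
    (hnonneg : ∀ u ∈ Icc s t, 0 ≤ F u) (hle : ∀ u ∈ Icc s t, F u ≤ K * ∫ v in s..u, F v) :
    EqOn F 0 (Icc s t) := by
  have hI_nonneg : ∀ u ∈ Icc s t, 0 ≤ ∫ v in s..u, F v := fun u hu =>
    integral_nonneg hu.1 fun v hv => hnonneg v ⟨hv.1, hv.2.trans hu.2⟩
  have hI_zero : ∀ u ∈ Icc s t, ∫ v in s..u, F v = 0 := fun u hu => by
    have := norm_le_gronwallBound_of_norm_deriv_right_le (δ := 0) (K := K) (ε := 0)
      (continuous_primitive hF.intervalIntegrable s).continuousOn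
      (fun u _ => (hF.integral_hasStrictDerivAt s u).hasDerivAt.hasDerivWithinAt)
      (by simp)
      (fun u hu => by
        have hu' : u ∈ Icc s t := Ico_subset_Icc_self hu
        rw [Real.norm_of_nonneg (hnonneg u hu'), Real.norm_of_nonneg (hI_nonneg u hu'), add_zero]
        exact hle u hu') u hu
    rwa [gronwallBound_ε0_δ0, norm_le_zero_iff] at this
  intro u hu
  exact le_antisymm (by simpa [hI_zero u hu] using hle u hu) (hnonneg u hu)

theorem exists_zero_pos_on_Ioc_of_nonpos_of_pos {D : ℝ → ℝ} {a t : ℝ} (hat : a ≤ t)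
    (hD : ContinuousOn D (Icc a t)) (ha : D a ≤ 0) (ht : 0 < D t) :
    ∃ s ∈ Icc a t, D s = 0 ∧ ∀ u ∈ Ioc s t, 0 < D u := by
  set S := Icc a t ∩ D ⁻¹' Iic 0
  have hS : IsCompact S := isCompact_Icc.of_isClosed_subset
    (hD.preimage_isClosed_of_isClosed isClosed_Icc isClosed_Iic) inter_subset_left
  have hs : sSup S ∈ S := hS.sSup_mem ⟨a, ⟨le_rfl, hat⟩, ha⟩
  obtain ⟨⟨has, hst⟩, hDs⟩ := hs
  have hpos : ∀ u ∈ Ioc (sSup S) t, 0 < D u := fun u hu => by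
    by_contra! h
    exact (le_csSup hS.bddAbove ⟨⟨has.trans hu.1.le, hu.2⟩, h⟩).not_gt hu.1
  refine ⟨sSup S, ⟨has, hst⟩, ?_, hpos⟩
  -- a zero in `[sSup S, t]` lies in `S`, hence is `sSup S` itself
  obtain ⟨c, hc, hDc⟩ := intermediate_value_Icc hst (hD.mono (Icc_subset_Icc has le_rfl))
    ⟨hDs, ht.le⟩
  obtain rfl : c = sSup S := hc.1.antisymm' (le_csSup hS.bddAbove
    ⟨⟨has.trans hc.1, hc.2⟩, hDc.le⟩)
  exact hDc

theorem nonpos_of_sub_le_mul_integral_abs {D : ℝ → ℝ} {K a t : ℝ} (hat : a ≤ t)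
    (hD : Continuous D) (ha : D a ≤ 0)
    (hinc : ∀ s ∈ Icc a t, ∀ u ∈ Icc s t, D u - D s ≤ K * ∫ v in s..u, |D v|) :
    D t ≤ 0 := by
  by_contra! ht
  obtain ⟨s, hs, hDs, hpos⟩ := exists_zero_pos_on_Ioc_of_nonpos_of_pos hat hD.continuousOn ha ht
  have hnonneg : ∀ u ∈ Icc s t, 0 ≤ D u := fun u hu =>
    hu.1.eq_or_lt.elim (fun h => h ▸ hDs.ge) fun h => (hpos u ⟨h, hu.2⟩).le
  have hle : ∀ u ∈ Icc s t, D u ≤ K * ∫ v in s..u, D v := fun u hu => by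
    have habs : ∫ v in s..u, |D v| = ∫ v in s..u, D v := integral_congr fun v hv => by
      rw [uIcc_of_le hu.1] at hv
      exact abs_of_nonneg (hnonneg v ⟨hv.1, hv.2.trans hu.2⟩)
    simpa [hDs, habs] using hinc s hs u hu
  exact ht.ne' (eqOn_zero_of_le_mul_integral hD hnonneg hle ⟨hs.2, le_rfl⟩)

theorem sub_sub_sub_le_mul_integral_abs_of_reflected {g : ℝ → ℝ} {K : Set ℝ} {L : NNReal}
    (hg : LipschitzOnWith L g K) {B X X' J : ℝ → ℝ} {t : ℝ}
    (hX : ContinuousOn X (Icc 0 t)) (hX' : ContinuousOn X' (Icc 0 t))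
    (hXK : MapsTo X (Icc 0 t) K) (hX'K : MapsTo X' (Icc 0 t) K)
    (hXeq : ∀ u ≥ (0 : ℝ), X u = X 0 + B u - ∫ v in (0 : ℝ)..u, (1 / 2) * g (X v))
    (hX'eq : ∀ u ≥ (0 : ℝ), X' u = X 0 + B u - (∫ v in (0 : ℝ)..u, (1 / 2) * g (X' v))
      + 2 * (J u - J 0))
    (hJ : MonotoneOn J (Icc 0 t)) :
    ∀ s ∈ Icc 0 t, ∀ u ∈ Icc s t,
      (X u - X' u) - (X s - X' s) ≤ L / 2 * ∫ v in s..u, |X v - X' v| := by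
  intro s hs u hu
  have hu0 : u ∈ Icc 0 t := ⟨hs.1.trans hu.1, hu.2⟩
  have hint : ∀ {h : ℝ → ℝ}, ContinuousOn h (Icc 0 t) →
      ∀ {p q : ℝ}, p ∈ Icc 0 t → q ∈ Icc 0 t → IntervalIntegrable h volume p q :=
    fun hh _ _ hp hq => (hh.mono (uIcc_subset_Icc hp hq)).intervalIntegrable
  have hincr : ∀ {h : ℝ → ℝ}, ContinuousOn h (Icc 0 t) →
      (∫ v in (0 : ℝ)..u, h v) - ∫ v in (0 : ℝ)..s, h v = ∫ v in s..u, h v := fun hh =>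
    integral_interval_sub_left (hint hh (left_mem_Icc.2 (hs.1.trans hs.2)) hu0)
      (hint hh (left_mem_Icc.2 (hs.1.trans hs.2)) hs)
  have hgX : ContinuousOn (fun v => (1 / 2) * g (X v)) (Icc 0 t) :=
    continuousOn_const.mul (hg.continuousOn.comp hX hXK)
  have hgX' : ContinuousOn (fun v => (1 / 2) * g (X' v)) (Icc 0 t) :=
    continuousOn_const.mul (hg.continuousOn.comp hX' hX'K)
  have hdrift : (X u - X' u) - (X s - X' s) =
      (∫ v in s..u, ((1 / 2) * g (X' v) - (1 / 2) * g (X v))) - 2 * (J u - J s) := by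
    rw [integral_sub (hint hgX' hs hu0) (hint hgX hs hu0), ← hincr hgX, ← hincr hgX',
      hXeq u hu0.1, hXeq s hs.1, hX'eq u hu0.1, hX'eq s hs.1]
    ring
  have hlip : ∀ v ∈ Icc s u, (1 / 2) * g (X' v) - (1 / 2) * g (X v) ≤ L / 2 * |X v - X' v| :=
    fun v hv => by
      have hv0 : v ∈ Icc 0 t := ⟨hs.1.trans hv.1, hv.2.trans hu.2⟩
      have := hg.dist_le_mul (X' v) (hX'K hv0) (X v) (hXK hv0)
      rw [Real.dist_eq, Real.dist_eq, abs_sub_comm (X' v)] at this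
      linarith [le_abs_self (g (X' v) - g (X v))]
  have hmono : ∫ v in s..u, ((1 / 2) * g (X' v) - (1 / 2) * g (X v)) ≤
      ∫ v in s..u, L / 2 * |X v - X' v| :=
    integral_mono_on hu.1 ((hint hgX' hs hu0).sub (hint hgX hs hu0))
      (hint (continuousOn_const.mul (hX.sub hX').abs) hs hu0) hlip
  rw [hdrift, ← intervalIntegral.integral_const_mul]
  linarith [hJ hs hu0 hu.1]

theorem le_of_reflected_integral_equation {g : ℝ → ℝ} {K : Set ℝ} {L : NNReal}
    (hg : LipschitzOnWith L g K) {B X X' J : ℝ → ℝ} {t : ℝ} (ht : 0 ≤ t)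
    (hX : Continuous X) (hX' : Continuous X')
    (hXK : MapsTo X (Icc 0 t) K) (hX'K : MapsTo X' (Icc 0 t) K)
    (hXeq : ∀ u ≥ (0 : ℝ), X u = X 0 + B u - ∫ v in (0 : ℝ)..u, (1 / 2) * g (X v))
    (hX'eq : ∀ u ≥ (0 : ℝ), X' u = X 0 + B u - (∫ v in (0 : ℝ)..u, (1 / 2) * g (X' v))
      + 2 * (J u - J 0))
    (hJ : MonotoneOn J (Icc 0 t)) :
    X t ≤ X' t := by
  have h0 : X 0 - X' 0 ≤ 0 := by
    have hX0 := hXeq 0 le_rfl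
    have hX'0 := hX'eq 0 le_rfl
    simp only [integral_same, sub_self, mul_zero, add_zero, sub_zero] at hX0 hX'0
    linarith
  exact sub_nonpos.mp <|
    nonpos_of_sub_le_mul_integral_abs (D := fun v => X v - X' v) ht (hX.sub hX') h0 <|
    sub_sub_sub_le_mul_integral_abs_of_reflected hg hX.continuousOn hX'.continuousOn hXK hX'K
      hXeq hX'eq hJ

theorem pathwise_comparison_reflected_general
    {Ω : Type*} [MeasurableSpace Ω] (μ : Measure Ω)
    (f : ℝ → ℝ)
    (hlip : ∀ K : Set ℝ, IsCompact K → K ⊆ Set.Ioi (0 : ℝ) →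
      ∃ L : NNReal, LipschitzOnWith L (fun x => deriv (deriv f) x / deriv f x) K)
    (β X X' J' : Ω → ℝ → ℝ)
    (hcont : ∀ᵐ ω ∂μ, Continuous (X ω) ∧ Continuous (X' ω) ∧ Continuous (J' ω))
    (hbounds : ∀ᵐ ω ∂μ, ∀ T > (0 : ℝ), ∃ a b : ℝ, 0 < a ∧
      ∀ t ∈ Set.Icc (0 : ℝ) T, X ω t ∈ Set.Icc a b ∧ X' ω t ∈ Set.Icc a b)
    (hXeq : ∀ᵐ ω ∂μ, ∀ t ≥ (0 : ℝ),
      X ω t = X ω 0 + β ω t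
        - ∫ u in (0 : ℝ)..t, (1 / 2) * (deriv (deriv f) (X ω u) / deriv f (X ω u)))
    (hX'eq : ∀ᵐ ω ∂μ, ∀ t ≥ (0 : ℝ),
      X' ω t = X ω 0 + β ω t
        - (∫ u in (0 : ℝ)..t, (1 / 2) * (deriv (deriv f) (X' ω u) / deriv f (X' ω u)))
        + 2 * (J' ω t - J' ω 0))
    (hJmono : ∀ᵐ ω ∂μ, Monotone (J' ω)) :
    ∀ᵐ ω ∂μ, ∀ t ≥ (0 : ℝ), X ω t ≤ X' ω t := by
  filter_upwards [hcont, hbounds, hXeq, hX'eq, hJmono] with ω hc hbd hXω hX'ω hJ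
  intro t ht
  obtain ⟨a, b, ha, hab⟩ := hbd (t + 1) (by linarith)
  obtain ⟨L, hL⟩ := hlip (Icc a b) isCompact_Icc fun x hx => ha.trans_le hx.1
  have hsub : Icc 0 t ⊆ Icc 0 (t + 1) := Icc_subset_Icc le_rfl (by linarith)
  exact le_of_reflected_integral_equation hL ht hc.1 hc.2.1 (fun v hv => (hab v (hsub hv)).1)
    (fun v hv => (hab v (hsub hv)).2) hXω hX'ω (hJ.monotoneOn _)

/-- Pathwise comparison with a reflected version (Lemma on pathwise comparison):
if `X` solves `X_t = X_0 + β_t − ∫₀ᵗ (1/2)T_f(X_u) du` and `X'` solves the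
Skorokhod-type equation
`X'_t = X_0 + β_t − ∫₀ᵗ (1/2)T_f(X'_u) du + 2(J'_t − J'_0)` with `J'`
nondecreasing, `J'_0 ∈ (0, X_0]`, `X' ≥ J'`, `J'` increasing only when
`X' = J'`, and `T_f = f''/f'` locally Lipschitz on `(0,∞)`, then `X ≤ X'`
for all times, almost surely. -/
theorem pathwise_comparison_reflected
    {Ω : Type*} [MeasurableSpace Ω] (μ : Measure Ω) [IsProbabilityMeasure μ]
    (f : ℝ → ℝ) (hf : ContDiffOn ℝ 3 f (Set.Ioi 0))
    (hf' : ∀ x ∈ Set.Ioi (0 : ℝ), deriv f x ≠ 0)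
    (hlip : ∀ K : Set ℝ, IsCompact K → K ⊆ Set.Ioi (0 : ℝ) →
      ∃ L : NNReal, LipschitzOnWith L (fun x => deriv (deriv f) x / deriv f x) K)
    (β X X' J' : Ω → ℝ → ℝ)
    (hβ : ∀ᵐ ω ∂μ, Continuous (β ω) ∧ β ω 0 = 0)
    (hcont : ∀ᵐ ω ∂μ, Continuous (X ω) ∧ Continuous (X' ω) ∧ Continuous (J' ω))
    (hbounds : ∀ᵐ ω ∂μ, ∀ T > (0 : ℝ), ∃ a b : ℝ, 0 < a ∧
      ∀ t ∈ Set.Icc (0 : ℝ) T, X ω t ∈ Set.Icc a b ∧ X' ω t ∈ Set.Icc a b)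
    (hXeq : ∀ᵐ ω ∂μ, ∀ t ≥ (0 : ℝ),
      X ω t = X ω 0 + β ω t
        - ∫ u in (0 : ℝ)..t, (1 / 2) * (deriv (deriv f) (X ω u) / deriv f (X ω u)))
    (hX'eq : ∀ᵐ ω ∂μ, ∀ t ≥ (0 : ℝ),
      X' ω t = X ω 0 + β ω t
        - (∫ u in (0 : ℝ)..t, (1 / 2) * (deriv (deriv f) (X' ω u) / deriv f (X' ω u)))
        + 2 * (J' ω t - J' ω 0))
    (hJmono : ∀ᵐ ω ∂μ, Monotone (J' ω))
    (hJ0 : ∀ᵐ ω ∂μ, J' ω 0 ∈ Set.Ioc (0 : ℝ) (X ω 0))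
    (hJle : ∀ᵐ ω ∂μ, ∀ t ≥ (0 : ℝ), J' ω t ≤ X' ω t)
    (hflat : ∀ᵐ ω ∂μ, ∀ s t : ℝ, 0 ≤ s → s ≤ t →
      (∀ u ∈ Set.Icc s t, J' ω u < X' ω u) → J' ω t = J' ω s) :
    ∀ᵐ ω ∂μ, ∀ t ≥ (0 : ℝ), X ω t ≤ X' ω t :=
  pathwise_comparison_reflected_general μ f hlip β X X' J' hcont hbounds hXeq hX'eq hJmono
end
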